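/- Let w = x_1 x_2 ... x_{p+1} be a strictly increasing word over C_n that is not an admissible column word but every strict factor of which is an admissible column word. Let z be the lowest unbarred letter with (z, z̄) in w and N(z) = z + 1, and let w̃ be obtained by deleting z and z̄ from w. Then w̃ is an admissible column word of length p - 1. -/

import Mathlib

/-! Letters of `C_n = {1 < ... < n < n̄ < ... < 1̄}` are encoded as natural
numbers in `[1, 2n]`: the unbarred letter `m` is `m` and the barred letter
`m̄` is `2n+1-m`. -/

/-- A column over `C_n`: a strictly increasing list of letters of `C_n`. -/
def IsColumn (n : ℕ) (C : List ℕ) : Prop :=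
  C.Chain' (· < ·) ∧ ∀ x ∈ C, 1 ≤ x ∧ x ≤ 2*n

/-- `N(m)`: the number of entries `x` of `C` with `x ≤ m` or `x ≥ m̄`. -/
def Ncount (n m : ℕ) (C : List ℕ) : ℕ :=
  (C.filter (fun x => decide (x ≤ m ∨ 2*n+1-m ≤ x))).length

/-- KN-admissibility via the counting condition `N(m) ≤ m` for all `m ≤ n`. -/
def KNAdmissible (n : ℕ) (C : List ℕ) : Prop :=
  ∀ m, 1 ≤ m → m ≤ n → Ncount n m C ≤ m

/-- KN-coadmissibility: for each pair `(z, z̄)` occurring in the column,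
the number of entries `x` with `z ≤ x ≤ z̄` is at most `n - z + 1`. -/
def Coadmissible (n : ℕ) (C : List ℕ) : Prop :=
  ∀ z, 1 ≤ z → z ≤ n → z ∈ C → (2*n+1-z) ∈ C →
    (C.filter (fun x => decide (z ≤ x ∧ x ≤ 2*n+1-z))).length ≤ n - z + 1

/-- The set `I = {z_1 > z_2 > ...}` of unbarred letters `z` such that both
`z` and `z̄` occur in `C`, listed in decreasing order. -/
def dupList (n : ℕ) (C : List ℕ) : List ℕ :=
  ((List.range (n+1)).filter (fun z => decide (1 ≤ z ∧ z ∈ C ∧ (2*n+1-z) ∈ C))).reverse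

/-- `t` is an unbarred letter `< bound` such that neither `t` nor `t̄` occurs in `C`. -/
def FreeLt (n : ℕ) (C : List ℕ) (bound t : ℕ) : Prop :=
  1 ≤ t ∧ t < bound ∧ t ∉ C ∧ (2*n+1-t) ∉ C

/-- `J = {t_1 > ... > t_r}` is the splitting set of `C`: `t_1` is the greatest
letter `< z_1` free in `C`, and `t_i` is the greatest letter `< min(t_{i-1}, z_i)`
free in `C`. -/
def IsSplittingSet (n : ℕ) (C J : List ℕ) : Prop :=
  J.length = (dupList n C).length ∧
  ∀ i < J.length,
    FreeLt n C (if i = 0 then (dupList n C).getD 0 0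
                else min (J.getD (i-1) 0) ((dupList n C).getD i 0)) (J.getD i 0) ∧
    ∀ s, FreeLt n C (if i = 0 then (dupList n C).getD 0 0
                else min (J.getD (i-1) 0) ((dupList n C).getD i 0)) s → s ≤ J.getD i 0

/-- `C` can be split. -/
def CanSplit (n : ℕ) (C : List ℕ) : Prop := ∃ J, IsSplittingSet n C J

/-- `lC`: replace each duplicated unbarred letter `z_i` by `t_i` and reorder. -/
def lCol (n : ℕ) (C I J : List ℕ) : List ℕ :=
  List.insertionSort (· ≤ ·)
    (C.map fun x => if x ∈ I ∧ x ≤ n then J.getD (I.idxOf x) x else x)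

/-- `rC`: replace each duplicated barred letter `z̄_i` by `t̄_i` and reorder. -/
def rCol (n : ℕ) (C I J : List ℕ) : List ℕ :=
  List.insertionSort (· ≤ ·)
    (C.map fun x => if (2*n+1-x) ∈ I ∧ n < x then 2*n+1 - J.getD (I.idxOf (2*n+1-x)) (2*n+1-x) else x)

/-- `C*`: the column made of the unbarred letters of `lC` followed by the
barred letters of `rC`. -/
def starCol (n : ℕ) (C I J : List ℕ) : List ℕ :=
  (lCol n C I J).filter (fun x => decide (x ≤ n)) ++
  (rCol n C I J).filter (fun x => decide (n < x))

open Classical in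
noncomputable def theSplit (n : ℕ) (C : List ℕ) : List ℕ :=
  if h : CanSplit n C then h.choose else []

noncomputable def lC (n : ℕ) (C : List ℕ) : List ℕ := lCol n C (dupList n C) (theSplit n C)
noncomputable def rC (n : ℕ) (C : List ℕ) : List ℕ := rCol n C (dupList n C) (theSplit n C)

/-- The map `Φ : C ↦ C*` from admissible to coadmissible columns. -/
noncomputable def PhiMap (n : ℕ) (C : List ℕ) : List ℕ :=
  starCol n C (dupList n C) (theSplit n C)

/-- `w` is a non-admissible column word all of whose strict factors are admissible. -/
def MinimalNonAdm (n : ℕ) (w : List ℕ) : Prop :=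
  IsColumn n w ∧ ¬ KNAdmissible n w ∧
  ∀ u, u <:+: w → u.length < w.length → KNAdmissible n u

/-- The lowest unbarred letter `z` with `(z, z̄)` in `w` and `N(z) = z + 1`. -/
def badLetter (n : ℕ) (w : List ℕ) : ℕ :=
  (((List.range (n+1)).filter (fun z =>
      decide (1 ≤ z ∧ z ∈ w ∧ (2*n+1-z) ∈ w ∧ Ncount n z w = z+1)))).headD 0

/-- `w̃`: the word obtained from `w` by erasing the pair `(z, z̄)`, `z = badLetter`. -/
def contract (n : ℕ) (w : List ℕ) : List ℕ :=
  w.filter (fun x => decide (x ≠ badLetter n w ∧ x ≠ 2*n+1 - badLetter n w))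

/-! ### Crystal operators via the signature rule. -/

/-- The `i`-signature of `w`: `+` (true) for letters `i`, `(i+1)bar`; `−` (false)
for letters `i+1`, `ī`; each with its position in `w`. -/
def sigList (n i : ℕ) (w : List ℕ) : List (Bool × ℕ) :=
  (w.zipIdx.map Prod.swap).filterMap (fun p =>
    if p.2 = i ∨ p.2 = 2*n - i then some (true, p.1)
    else if p.2 = i+1 ∨ p.2 = 2*n+1-i then some (false, p.1)
    else none)

/-- One step of the `+−` cancellation, using a stack. -/
def reduceStep (st : List (Bool × ℕ)) (it : Bool × ℕ) : List (Bool × ℕ) :=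
  match st, it with
  | (true, _) :: rest, (false, _) => rest
  | _, _ => it :: st

/-- The reduced signature `ρ_i(w) = −^r +^s` (with positions). -/
def reducedSig (l : List (Bool × ℕ)) : List (Bool × ℕ) := (l.foldl reduceStep []).reverse

/-- Kashiwara operator `f̃_i` on words (`none` encodes `0`). -/
def fOp (n i : ℕ) (w : List ℕ) : Option (List ℕ) :=
  match (reducedSig (sigList n i w)).find? (fun s => s.1) with
  | some s => some (w.set s.2 (if w.getD s.2 0 = i then i+1 else 2*n+1-i))
  | none => none

/-- Kashiwara operator `ẽ_i` on words (`none` encodes `0`). -/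
def eOp (n i : ℕ) (w : List ℕ) : Option (List ℕ) :=
  match ((reducedSig (sigList n i w)).reverse.find? (fun s => !s.1)) with
  | some s => some (w.set s.2 (if w.getD s.2 0 = i+1 then i else 2*n - i))
  | none => none

/-- `ε_i(w)`. -/
def epsC (n i : ℕ) (w : List ℕ) : ℕ :=
  ((reducedSig (sigList n i w)).filter (fun s => !s.1)).length

/-- `φ_i(w)`. -/
def phiC (n i : ℕ) (w : List ℕ) : ℕ :=
  ((reducedSig (sigList n i w)).filter (fun s => s.1)).length

/-- One crystal edge of some color `i ∈ {1,...,n}` (in either direction). -/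
def CrystalStep (n : ℕ) (w w' : List ℕ) : Prop :=
  ∃ i, 1 ≤ i ∧ i ≤ n ∧ (fOp n i w = some w' ∨ eOp n i w = some w')

/-- Same connected component of the crystal graph `G_n`. -/
def SameComp (n : ℕ) : List ℕ → List ℕ → Prop := Relation.EqvGen (CrystalStep n)

/-- One crystal edge of color `i ∈ {1,...,n−1}` (the `U_q(sl_n)` structure). -/
def CrystalStepA (n : ℕ) (w w' : List ℕ) : Prop :=
  ∃ i, 1 ≤ i ∧ i + 1 ≤ n ∧ (fOp n i w = some w' ∨ eOp n i w = some w')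

/-- Same `U_q(sl_n)`-connected component (arrows of color `n` removed). -/
def SameCompA (n : ℕ) : List ℕ → List ℕ → Prop := Relation.EqvGen (CrystalStepA n)

/-- Highest weight vertex: `ẽ_i(w) = 0` for all `i = 1,...,n`. -/
def HighestWt (n : ℕ) (w : List ℕ) : Prop := ∀ i, 1 ≤ i → i ≤ n → eOp n i w = none

/-- The weight `d(w)`: `d_i = #(i in w) − #(ī in w)`. -/
def wt (n : ℕ) (w : List ℕ) (i : ℕ) : ℤ := (w.count i : ℤ) - (w.count (2*n+1-i) : ℤ)

/-- Apply the sequence of operators `f̃_{i}` for `i ∈ l` successively. -/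
def applyF (n : ℕ) (l : List ℕ) (w : List ℕ) : Option (List ℕ) :=
  l.foldl (fun ow i => ow.bind (fOp n i)) (some w)

/-- `w1 ∼ w2`: same place in two isomorphic connected components of `G_n`. -/
def SamePlace (n : ℕ) (w1 w2 : List ℕ) : Prop :=
  ∃ w10 w20 l, HighestWt n w10 ∧ HighestWt n w20 ∧
    (∀ i, 1 ≤ i → i ≤ n → wt n w10 i = wt n w20 i) ∧
    (∀ i ∈ l, 1 ≤ i ∧ i ≤ n) ∧
    applyF n l w10 = some w1 ∧ applyF n l w20 = some w2

/-! ### The plactic relations. -/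

/-- The relations `R1` and `R2` (on bare length-3 words). -/
inductive KnuthRel (n : ℕ) : List ℕ → List ℕ → Prop
  | R1a (x y z : ℕ) : 1 ≤ x → x ≤ y → y < z → z ≤ 2*n → z ≠ 2*n+1-x →
      KnuthRel n [y,z,x] [y,x,z]
  | R1b (x y z : ℕ) : 1 ≤ x → x < y → y ≤ z → z ≤ 2*n → z ≠ 2*n+1-x →
      KnuthRel n [x,z,y] [z,x,y]
  | R2a (x y : ℕ) : 1 < x → x ≤ n → x ≤ y → y ≤ 2*n+1-x →
      KnuthRel n [y, 2*n+2-x, x-1] [y, x, 2*n+1-x]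
  | R2b (x y : ℕ) : 1 < x → x ≤ n → x ≤ y → y ≤ 2*n+1-x →
      KnuthRel n [x, 2*n+1-x, y] [2*n+2-x, x-1, y]

/-- One rewriting step, in context, by `R1`, `R2` or the contraction `R3`. -/
inductive PlStep (n : ℕ) : List ℕ → List ℕ → Prop
  | knuth (u v w w' : List ℕ) : KnuthRel n w w' → PlStep n (u++w++v) (u++w'++v)
  | contr (u v w : List ℕ) : MinimalNonAdm n w → PlStep n (u++w++v) (u++(contract n w)++v)

/-- The plactic congruence of `Pl(C_n)`. -/
def Plactic (n : ℕ) : List ℕ → List ℕ → Prop := Relation.EqvGen (PlStep n)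

/-- One rewriting step in context using only `R1` and `R2`. -/
inductive Pl12Step (n : ℕ) : List ℕ → List ℕ → Prop
  | knuth (u v w w' : List ℕ) : KnuthRel n w w' → Pl12Step n (u++w++v) (u++w'++v)

/-- The congruence generated by `R1` and `R2` only. -/
def Plactic12 (n : ℕ) : List ℕ → List ℕ → Prop := Relation.EqvGen (Pl12Step n)

/-- Relation on `Option`s: `none ↔ none`, `some ↔ some` related values. -/
def OptRel (r : List ℕ → List ℕ → Prop) : Option (List ℕ) → Option (List ℕ) → Prop
  | none, none => True
  | some a, some b => r a b
  | _, _ => False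

/-! ### Symplectic tableaux. -/

/-- `C ≤ D` for columns with `h(C) ≥ h(D)`: rows of `CD` weakly increasing. -/
def ColLe (C D : List ℕ) : Prop :=
  D.length ≤ C.length ∧ ∀ k < D.length, C.getD k 0 ≤ D.getD k 0

/-- A symplectic tableau: a list of admissible columns, left to right, with
`rC_i ≤ lC_{i+1}` (Sheats' description of the KN conditions). -/
def IsSympTab (n : ℕ) (T : List (List ℕ)) : Prop :=
  (∀ C ∈ T, IsColumn n C ∧ KNAdmissible n C) ∧
  T.Chain' (fun C D => ColLe (rC n C) (lC n D))

/-- The reading of a tableau: columns from right to left, top to bottom. -/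
def reading (T : List (List ℕ)) : List ℕ := T.reverse.foldr (· ++ ·) []

/-- Number of boxes in row `k` (0-based) of the shape of `T`. -/
def rowLenF (T : List (List ℕ)) (k : ℕ) : ℕ :=
  (T.filter (fun C => decide (k < C.length))).length

/-- `g` is obtained from `f` by adding exactly one box (in some row). -/
def AddOneBox (f g : ℕ → ℕ) : Prop := ∃ j, g j = f j + 1 ∧ ∀ k, k ≠ j → g k = f k

/-- Two diagrams differ by exactly one box. -/
def DiffOneBox (f g : ℕ → ℕ) : Prop := AddOneBox f g ∨ AddOneBox g f

/-- An `n`-oscillating tableau of length `l` (diagrams as row-length functions,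
normalized to `0` outside `{1,...,l}`). -/
def IsOscTab (n l : ℕ) (Q : ℕ → ℕ → ℕ) : Prop :=
  (∀ k, Q 0 k = 0) ∧ (∀ i, l < i → ∀ k, Q i k = 0) ∧
  (∀ i < l, DiffOneBox (Q i) (Q (i+1))) ∧
  (∀ i k, Q i (k+1) ≤ Q i k) ∧
  (∀ i k, n ≤ k → Q i k = 0)

/-! A minimal non-admissible column `w` violates admissibility only by one: `N(m)` grows by at
most one when the last letter of `w` is appended to the admissible `w.dropLast`, so
`N(m) ≤ m + 1` everywhere. At the least violation `z` we have `N(z - 1) ≤ z - 1 < N(z)`,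
and passing from `z - 1` to `z` only adds the letters `z` and `z̄`; hence both occur in `w`,
`N(z) = z + 1`, and `z` is the letter erased by `contract`. Erasing `z` and `z̄` lowers `N(m)`
by two for every `m ≥ z` and does not raise it below `z`. -/

section Ncount

variable {n m : ℕ} {l l₁ l₂ : List ℕ}

theorem Ncount_eq_countP (n m : ℕ) (l : List ℕ) :
    Ncount n m l = l.countP (fun x => decide (x ≤ m ∨ 2*n+1-m ≤ x)) :=
  List.countP_eq_length_filter.symm

theorem Ncount_le_Ncount_of_sublist (h : l₁.Sublist l₂) : Ncount n m l₁ ≤ Ncount n m l₂ := by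
  simpa only [Ncount_eq_countP] using h.countP_le

theorem Ncount_erase (a : ℕ) :
    Ncount n m (l.erase a) =
      Ncount n m l - (if a ∈ l ∧ (a ≤ m ∨ 2*n+1-m ≤ a) then 1 else 0) := by
  simp only [Ncount_eq_countP, List.countP_erase, decide_eq_true_iff]

theorem Ncount_le_Ncount_dropLast_add_one (n m : ℕ) (l : List ℕ) :
    Ncount n m l ≤ Ncount n m l.dropLast + 1 := by
  rcases eq_or_ne l [] with rfl | hl
  · simp [Ncount]
  conv_lhs => rw [← List.dropLast_concat_getLast hl]
  rw [Ncount_eq_countP, Ncount_eq_countP, List.countP_append]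
  exact Nat.add_le_add_left (List.countP_le_length) _

theorem Ncount_le_Ncount_pred_add_count (n m : ℕ) (l : List ℕ) :
    Ncount n m l ≤ Ncount n (m-1) l + l.count m + l.count (2*n+1-m) := by
  induction l with
  | nil => simp [Ncount]
  | cons y t ih =>
    simp only [Ncount_eq_countP, List.countP_cons, List.count_cons, beq_iff_eq,
      decide_eq_true_iff] at ih ⊢
    split_ifs <;> omega

theorem KNAdmissible_nil (n : ℕ) : KNAdmissible n [] := fun m _ _ => by simp [Ncount]

end Ncount

namespace IsColumn

variable {n : ℕ} {w : List ℕ}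

theorem nodup (hw : IsColumn n w) : w.Nodup :=
  (List.isChain_iff_pairwise.mp hw.1).nodup

theorem sublist {u : List ℕ} (hw : IsColumn n w) (h : u.Sublist w) : IsColumn n u :=
  ⟨hw.1.sublist h, fun x hx => hw.2 x (h.subset hx)⟩

theorem Ncount_zero (hw : IsColumn n w) : Ncount n 0 w = 0 := by
  rw [Ncount_eq_countP, List.countP_eq_zero]
  intro x hx
  have := hw.2 x hx
  simp only [decide_eq_true_iff]
  omega

theorem pair_mem_of_least_violation (hw : IsColumn n w) {z : ℕ} (hz : z < Ncount n z w)
    (hmin : ∀ m < z, Ncount n m w ≤ m) :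
    1 ≤ z ∧ z ∈ w ∧ 2*n+1-z ∈ w ∧ Ncount n z w = z + 1 := by
  have hz1 : 1 ≤ z := by
    by_contra! h
    obtain rfl : z = 0 := by omega
    rw [hw.Ncount_zero] at hz
    omega
  have hpred := hmin (z - 1) (by omega)
  have hstep := Ncount_le_Ncount_pred_add_count n z w
  have hcount := List.nodup_iff_count_le_one.mp hw.nodup
  have hcz := hcount z
  have hczbar := hcount (2*n+1-z)
  refine ⟨hz1, List.count_pos_iff.mp ?_, List.count_pos_iff.mp ?_, ?_⟩ <;> omega

end IsColumn

namespace MinimalNonAdm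

variable {n : ℕ} {w : List ℕ}

theorem ne_nil (hw : MinimalNonAdm n w) : w ≠ [] := by
  rintro rfl
  exact hw.2.1 (KNAdmissible_nil n)

theorem Ncount_le_succ (hw : MinimalNonAdm n w) {m : ℕ} (h1 : 1 ≤ m) (h2 : m ≤ n) :
    Ncount n m w ≤ m + 1 := by
  have hlen : w.dropLast.length < w.length := by
    rw [List.length_dropLast]
    have := List.length_pos_iff.mpr hw.ne_nil
    omega
  have := hw.2.2 _ (List.dropLast_prefix w).isInfix hlen m h1 h2
  have := Ncount_le_Ncount_dropLast_add_one n m w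
  omega

theorem exists_least_violation (hw : MinimalNonAdm n w) :
    ∃ z ≤ n, z < Ncount n z w ∧ ∀ m < z, Ncount n m w ≤ m := by
  have hex : ∃ z, z ≤ n ∧ z < Ncount n z w := by
    by_contra! h
    exact hw.2.1 fun m _ hm => h m hm
  refine ⟨Nat.find hex, (Nat.find_spec hex).1, (Nat.find_spec hex).2, fun m hm => ?_⟩
  have := Nat.find_min hex hm
  have : m ≤ n := by have := (Nat.find_spec hex).1; omega
  omega

end MinimalNonAdm

theorem badLetter_eq_of_least {n z : ℕ} {w : List ℕ} (hzn : z ≤ n) (hz1 : 1 ≤ z)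
    (hzw : z ∈ w) (hzbar : 2*n+1-z ∈ w) (hNz : Ncount n z w = z + 1)
    (hmin : ∀ m < z, Ncount n m w ≤ m) : badLetter n w = z := by
  rw [badLetter, List.headD_eq_head?_getD, List.head?_filter,
    List.find?_range_eq_some.mpr, Option.getD_some]
  refine ⟨by simp [hz1, hzw, hzbar, hNz], List.mem_range.mpr (by omega), fun j hj => ?_⟩
  have := hmin j hj
  simp only [Bool.not_eq_true', decide_eq_false_iff_not, not_and]
  omega

theorem List.Nodup.filter_ne_and_ne_eq_erase_erase {l : List ℕ} (hl : l.Nodup) (a b : ℕ) :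
    l.filter (fun x => decide (x ≠ a ∧ x ≠ b)) = (l.erase a).erase b := by
  rw [(hl.erase a).erase_eq_filter, hl.erase_eq_filter, List.filter_filter]
  congr 1
  funext x
  simp [bne, _root_.beq_eq_decide, Bool.and_comm]

theorem KNAdmissible_erase_pair {n z : ℕ} {w : List ℕ}
    (hbound : ∀ m, 1 ≤ m → m ≤ n → Ncount n m w ≤ m + 1) (hzn : z ≤ n) (hzw : z ∈ w)
    (hzbar : 2*n+1-z ∈ w) (hmin : ∀ m < z, Ncount n m w ≤ m) :
    KNAdmissible n ((w.erase z).erase (2*n+1-z)) := by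
  intro m h1 h2
  by_cases hmz : m < z
  · calc Ncount n m ((w.erase z).erase (2*n+1-z))
        ≤ Ncount n m w := Ncount_le_Ncount_of_sublist (List.erase_sublist.trans List.erase_sublist)
      _ ≤ m := hmin m hmz
  · have hzbar' : 2*n+1-z ∈ w.erase z := (List.mem_erase_of_ne (by omega)).mpr hzbar
    have := hbound m h1 h2
    rw [Ncount_erase, Ncount_erase, if_pos ⟨hzw, by omega⟩, if_pos ⟨hzbar', by omega⟩]
    omega

theorem stmt9_general (n p : ℕ) (w : List ℕ) (hw : MinimalNonAdm n w)
    (hl : w.length = p + 1) :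
    IsColumn n (contract n w) ∧ KNAdmissible n (contract n w) ∧
    (contract n w).length = p - 1 := by
  obtain ⟨z, hzn, hz, hmin⟩ := hw.exists_least_violation
  obtain ⟨hz1, hzw, hzbar, hNz⟩ := hw.1.pair_mem_of_least_violation hz hmin
  have hcontract : contract n w = (w.erase z).erase (2*n+1-z) := by
    rw [contract, badLetter_eq_of_least hzn hz1 hzw hzbar hNz hmin,
      hw.1.nodup.filter_ne_and_ne_eq_erase_erase]
  have hzbar' : 2*n+1-z ∈ w.erase z := (List.mem_erase_of_ne (by omega)).mpr hzbar
  rw [hcontract]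
  refine ⟨hw.1.sublist (List.erase_sublist.trans List.erase_sublist),
    KNAdmissible_erase_pair (fun m => hw.Ncount_le_succ) hzn hzw hzbar hmin, ?_⟩
  rw [List.length_erase_of_mem hzbar', List.length_erase_of_mem hzw, hl]
  omega

/-- erasing the pair `(z, z̄)` from a minimal non-admissible
column word of length `p+1` yields an admissible column word of length `p-1`. -/
theorem stmt9 (n p : ℕ) (hn : 1 ≤ n) (w : List ℕ) (hw : MinimalNonAdm n w)
    (hl : w.length = p + 1) :
    IsColumn n (contract n w) ∧ KNAdmissible n (contract n w) ∧
    (contract n w).length = p - 1 :=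
  stmt9_general n p w hw hl
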